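/- arXiv:2603.05455 — 6 statements merged into one kernel-verified Lean document; each statement's English description precedes it below -/
import Mathlib

section
/- Let g ≥ 2 and let s : {1,...,2g-2} → ℤ be a function such that for all δ, δ' ∈ {1,...,2g-2} with δ' < δ the inequalities -δ + 1 ≤ δ'·s(δ) - δ·s(δ') ≤ δ' - 1 hold. Then there exists a real number β such that s(δ) = ⌈βδ⌉ for all δ ∈ {1,...,2g-2}. -/
/-- Let `g ≥ 2` and let `s : {1,...,2g-2} → ℤ` satisfy, for all `1 ≤ δ' < δ ≤ 2g-2`,
the inequalities `-δ + 1 ≤ δ'·s(δ) - δ·s(δ') ≤ δ' - 1`. Then there exists a real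
number `β` with `s(δ) = ⌈βδ⌉` for all `δ ∈ {1,...,2g-2}`. -/
theorem stmt7 (g : ℤ) (hg : 2 ≤ g) (s : ℤ → ℤ)
    (hs : ∀ δ δ' : ℤ, 1 ≤ δ' → δ' < δ → δ ≤ 2 * g - 2 →
      -δ + 1 ≤ δ' * s δ - δ * s δ' ∧ δ' * s δ - δ * s δ' ≤ δ' - 1) :
    ∃ β : ℝ, ∀ δ : ℤ, 1 ≤ δ → δ ≤ 2 * g - 2 → s δ = ⌈β * (δ : ℝ)⌉ := by
  set N := 2 * g - 2 with hN
  have hN1 : (1 : ℤ) ≤ N := by omega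
  set f : ℤ → ℝ := fun δ => ((s δ : ℝ) - 1) / (δ : ℝ) with hf
  set u : ℤ → ℝ := fun δ => (s δ : ℝ) / (δ : ℝ) with hu
  -- key: for all δ, δ' in range, f δ < u δ'
  have key : ∀ δ ∈ Finset.Icc 1 N, ∀ δ' ∈ Finset.Icc 1 N, f δ < u δ' := by
    intro δ hδ δ' hδ'
    simp only [Finset.mem_Icc] at hδ hδ'
    have hδpos : (0 : ℝ) < (δ : ℝ) := by exact_mod_cast hδ.1.trans_lt' (by norm_num)
    have hδ'pos : (0 : ℝ) < (δ' : ℝ) := by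
      exact_mod_cast hδ'.1.trans_lt' (by norm_num)
    rw [hf, hu, div_lt_div_iff₀ hδpos hδ'pos]
    have hint : δ' * (s δ - 1) < δ * s δ' := by
      rcases lt_trichotomy δ δ' with h | h | h
      · have := (hs δ' δ hδ.1 h hδ'.2).1
        nlinarith [hδ.1, hδ'.1]
      · subst h; nlinarith [hδ.1]
      · have := (hs δ δ' hδ'.1 h hδ.2).2
        nlinarith [hδ.1, hδ'.1]
    calc ((s δ : ℝ) - 1) * δ' = ((δ' * (s δ - 1) : ℤ) : ℝ) := by push_cast; ring
      _ < ((δ * s δ' : ℤ) : ℝ) := by exact_mod_cast hint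
      _ = (s δ' : ℝ) * δ := by push_cast; ring
  have hne : (Finset.Icc 1 N).Nonempty := ⟨1, Finset.mem_Icc.mpr ⟨le_refl _, hN1⟩⟩
  obtain ⟨δ₀, hδ₀, hmax⟩ := Finset.exists_max_image (Finset.Icc 1 N) f hne
  obtain ⟨δ₁, hδ₁, hmin⟩ := Finset.exists_min_image (Finset.Icc 1 N) u hne
  have hLU : f δ₀ < u δ₁ := key δ₀ hδ₀ δ₁ hδ₁
  refine ⟨(f δ₀ + u δ₁) / 2, ?_⟩
  intro δ h1 h2
  have hδmem : δ ∈ Finset.Icc 1 N := Finset.mem_Icc.mpr ⟨h1, h2⟩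
  have hlo : f δ < (f δ₀ + u δ₁) / 2 := (hmax δ hδmem).trans_lt (by linarith)
  have hhi : (f δ₀ + u δ₁) / 2 < u δ := lt_of_lt_of_le (by linarith) (hmin δ hδmem)
  have hδpos : (0 : ℝ) < (δ : ℝ) := by exact_mod_cast h1.trans_lt' (by norm_num)
  set β := (f δ₀ + u δ₁) / 2
  have h1' : (s δ : ℝ) - 1 < β * δ := by
    have := (div_lt_iff₀ hδpos).mp hlo; linarith
  have h2' : β * δ < (s δ : ℝ) := by
    have := (lt_div_iff₀ hδpos).mp hhi; linarith
  exact (Int.ceil_eq_iff.mpr ⟨by linarith, by linarith⟩).symm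
end

section
/- In the primitive stability domain D_{g,1}^{pr}, we have (e₁;h₁) < (e₂;h₂) in the partial order if and only if there exists (ẽ;h̃) ∈ D_{g,1}^{pr} and an index i with max{1, h₁+h̃+e₁+ẽ-g-2} ≤ i ≤ min{e₁-1, ẽ-1} such that (e₂;h₂) = (e₁+ẽ-2i; h₁+h̃+i-1). -/
/-- Membership in the primitive stability domain `𝔻_{g,1}^{pr}`. -/
def DprMem (g e h : ℤ) : Prop :=
  2 ≤ e ∧ 0 ≤ h ∧ h ≤ g - e + 1 ∧ 0 < 2 * h - 2 + e ∧ 0 < 2 * g - 2 * h - e + 1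

/-- The partial order on `𝔻_{g,1}^{pr}`: `(e₁;h₁) ≤ (e₂;h₂)` iff `h₁ ≤ h₂` and
`e₁+h₁ ≤ e₂+h₂`. -/
def DprLe (e1 h1 e2 h2 : ℤ) : Prop := h1 ≤ h2 ∧ e1 + h1 ≤ e2 + h2

/-- In the primitive stability domain `𝔻_{g,1}^{pr}`, `(e₁;h₁) < (e₂;h₂)` if and only
if `(e₂;h₂) = (e₁;h₁) ∘ᵢ (ẽ;h̃)` for some `(ẽ;h̃) ∈ 𝔻_{g,1}^{pr}` and some admissible
index `i`. -/
theorem stmt8 (g : ℤ) (hg : 2 ≤ g) (e1 h1 e2 h2 : ℤ)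
    (hx1 : DprMem g e1 h1) (hx2 : DprMem g e2 h2) :
    (DprLe e1 h1 e2 h2 ∧ (e1, h1) ≠ (e2, h2)) ↔
      ∃ et ht i : ℤ, DprMem g et ht ∧
        max 1 (h1 + ht + e1 + et - g - 2) ≤ i ∧ i ≤ min (e1 - 1) (et - 1) ∧
        e2 = e1 + et - 2 * i ∧ h2 = h1 + ht + i - 1 := by
  constructor
  · rintro ⟨⟨hle1, hle2⟩, hne⟩
    have hne' : ¬(e1 = e2 ∧ h1 = h2) := fun ⟨a, b⟩ => hne (by simp [a, b])
    refine ⟨e2 - e1 + 2 * max 1 (e1 - e2 + 1), h2 - h1 - max 1 (e1 - e2 + 1) + 1,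
      max 1 (e1 - e2 + 1), ?_⟩
    unfold DprMem at *
    omega
  · rintro ⟨et, ht, i, hm, h1i, h2i, he, hh⟩
    unfold DprMem at *
    refine ⟨⟨by omega, by omega⟩, fun heq => ?_⟩
    rw [Prod.mk.injEq] at heq
    omega
end

section
/- Let n ≥ 1 and let D ⊆ D_{g,n} be a degeneracy subset (closed under complement and under triangles). Fix j ∈ {1,...,n} and set E := {(e;h,A) ∈ D : j ∈ A}. Then: (a) for each x ∈ D, exactly one of x and x^c lies in E; and (b) every triangle Δ contained in D satisfies |Δ ∩ E| = 1. Consequently the empty set is the maximum element of the poset Deg_{g,n}. -/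
/-- Half-vine types: triples `(e; h, A)` with `e, h : ℤ` and `A ⊆ [n]`. -/
abbrev HV (n : ℕ) := ℤ × ℤ × Finset (Fin n)

/-- Membership in the stability domain `𝔻_{g,n}`. -/
def hvMem (g : ℤ) {n : ℕ} (x : HV n) : Prop :=
  1 ≤ x.1 ∧ 0 ≤ x.2.1 ∧ x.2.1 ≤ g - x.1 + 1 ∧
  0 < 2 * x.2.1 - 2 + x.1 + (x.2.2.card : ℤ) ∧
  0 < 2 * g - 2 * x.2.1 - x.1 + ((x.2.2ᶜ).card : ℤ)

/-- The complement `(e;h,A)^c = (e; g-h-e+1, Aᶜ)`. -/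
def hvCompl (g : ℤ) {n : ℕ} (x : HV n) : HV n :=
  (x.1, g - x.2.1 - x.1 + 1, x.2.2ᶜ)

/-- `[x1, x2, x3]` is a triangle in `𝔻_{g,n}`. -/
def hvTriangle (g : ℤ) {n : ℕ} (x1 x2 x3 : HV n) : Prop :=
  hvMem g x1 ∧ hvMem g x2 ∧ hvMem g x3 ∧
  ((2 : ℤ) ∣ (x1.1 + x2.1 + x3.1)) ∧
  x3.1 + 2 ≤ x1.1 + x2.1 ∧ x1.1 + 2 ≤ x2.1 + x3.1 ∧ x2.1 + 2 ≤ x1.1 + x3.1 ∧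
  Disjoint x1.2.2 x2.2.2 ∧ Disjoint x1.2.2 x3.2.2 ∧ Disjoint x2.2.2 x3.2.2 ∧
  x1.2.2 ∪ x2.2.2 ∪ x3.2.2 = Finset.univ ∧
  2 * g = 2 * (x1.2.1 + x2.2.1 + x3.2.1) + (x1.1 + x2.1 + x3.1) - 4

/-- A degeneracy subset of type `(g,n)`: a subset of `𝔻_{g,n}` closed under
complement and under triangles. -/
def IsDegSubset (g : ℤ) {n : ℕ} (D : Set (HV n)) : Prop :=
  (∀ x ∈ D, hvMem g x) ∧
  (∀ x ∈ D, hvCompl g x ∈ D) ∧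
  (∀ x1 x2 x3 : HV n, hvTriangle g x1 x2 x3 →
    ((x1 ∈ D ∧ x2 ∈ D → x3 ∈ D) ∧ (x1 ∈ D ∧ x3 ∈ D → x2 ∈ D) ∧
      (x2 ∈ D ∧ x3 ∈ D → x1 ∈ D)))

open Classical in
/-- Number of elements of `{x1, x2, x3}` (with multiplicity) lying in `S`. -/
noncomputable def hvCnt {n : ℕ} (S : Set (HV n)) (x1 x2 x3 : HV n) : ℕ :=
  (if x1 ∈ S then 1 else 0) + (if x2 ∈ S then 1 else 0) + (if x3 ∈ S then 1 else 0)

/-- `E` is a witness for the order relation `D1 ≥ D2` on degeneracy subsets. -/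
def IsWitness (g : ℤ) {n : ℕ} (D1 D2 E : Set (HV n)) : Prop :=
  E ⊆ D2 \ D1 ∧
  (∀ x ∈ D2 \ D1, (x ∈ E ↔ hvCompl g x ∈ (D2 \ D1) \ E)) ∧
  (∀ x1 x2 x3 : HV n, hvTriangle g x1 x2 x3 → x1 ∈ D2 → x2 ∈ D2 → x3 ∈ D2 →
    hvCnt D1 x1 x2 x3 = 1 → hvCnt E x1 x2 x3 = 1) ∧
  (∀ x1 x2 x3 : HV n, hvTriangle g x1 x2 x3 →
    x1 ∈ D2 \ D1 → x2 ∈ D2 \ D1 → x3 ∈ D2 \ D1 →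
    hvCnt E x1 x2 x3 = 1 ∨ hvCnt E x1 x2 x3 = 2)

/-- The order relation: `D1 ≥ D2` iff `D1 ⊆ D2` and a witness exists. -/
def DegGe (g : ℤ) {n : ℕ} (D1 D2 : Set (HV n)) : Prop :=
  D1 ⊆ D2 ∧ ∃ E : Set (HV n), IsWitness g D1 D2 E

lemma hv_xor (g : ℤ) {n : ℕ} (D : Set (HV n)) (hD : IsDegSubset g D) (j : Fin n) :
    ∀ x ∈ D, Xor' (x ∈ {y ∈ D | j ∈ y.2.2}) (hvCompl g x ∈ {y ∈ D | j ∈ y.2.2}) := by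
  intro x hx
  have hc : hvCompl g x ∈ D := hD.2.1 x hx
  have hcj : (hvCompl g x).2.2 = x.2.2ᶜ := rfl
  by_cases hj : j ∈ x.2.2
  · exact Or.inl ⟨⟨hx, hj⟩, fun h => (Finset.mem_compl.mp (hcj ▸ h.2)) hj⟩
  · exact Or.inr ⟨⟨hc, hcj ▸ Finset.mem_compl.mpr hj⟩, fun h => hj h.2⟩

lemma hv_cnt (g : ℤ) {n : ℕ} (D : Set (HV n)) (j : Fin n) :
    ∀ x1 x2 x3 : HV n, hvTriangle g x1 x2 x3 → x1 ∈ D → x2 ∈ D → x3 ∈ D →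
      hvCnt {y ∈ D | j ∈ y.2.2} x1 x2 x3 = 1 := by
  intro x1 x2 x3 ht h1 h2 h3
  obtain ⟨-, -, -, -, -, -, -, d12, d13, d23, hu, -⟩ := ht
  have hju : j ∈ x1.2.2 ∪ x2.2.2 ∪ x3.2.2 := hu ▸ Finset.mem_univ j
  simp only [Finset.mem_union] at hju
  have n12 : ¬ (j ∈ x1.2.2 ∧ j ∈ x2.2.2) := fun ⟨a, b⟩ =>
    Finset.disjoint_left.mp d12 a b
  have n13 : ¬ (j ∈ x1.2.2 ∧ j ∈ x3.2.2) := fun ⟨a, b⟩ =>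
    Finset.disjoint_left.mp d13 a b
  have n23 : ¬ (j ∈ x2.2.2 ∧ j ∈ x3.2.2) := fun ⟨a, b⟩ =>
    Finset.disjoint_left.mp d23 a b
  have m1 : x1 ∈ {y ∈ D | j ∈ y.2.2} ↔ j ∈ x1.2.2 := by simp [h1]
  have m2 : x2 ∈ {y ∈ D | j ∈ y.2.2} ↔ j ∈ x2.2.2 := by simp [h2]
  have m3 : x3 ∈ {y ∈ D | j ∈ y.2.2} ↔ j ∈ x3.2.2 := by simp [h3]
  unfold hvCnt
  rcases hju with (hj | hj) | hj
  · rw [if_pos (m1.mpr hj), if_neg (fun h => n12 ⟨hj, m2.mp h⟩),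
      if_neg (fun h => n13 ⟨hj, m3.mp h⟩)]
  · rw [if_neg (fun h => n12 ⟨m1.mp h, hj⟩), if_pos (m2.mpr hj),
      if_neg (fun h => n23 ⟨hj, m3.mp h⟩)]
  · rw [if_neg (fun h => n13 ⟨m1.mp h, hj⟩), if_neg (fun h => n23 ⟨m2.mp h, hj⟩),
      if_pos (m3.mpr hj)]

/-- Let `n ≥ 1` and let `D ⊆ 𝔻_{g,n}` be a degeneracy subset. Fix `j ∈ [n]` and
set `E := {(e;h,A) ∈ D : j ∈ A}`. Then: (a) for each `x ∈ D` exactly one of `x`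
and `x^c` lies in `E`; (b) every triangle contained in `D` meets `E` in exactly
one element (with multiplicity). Consequently `∅` is the maximum element of the
poset of degeneracy subsets `Deg_{g,n}`. -/
theorem stmt12 (g : ℤ) (n : ℕ) (hn : 1 ≤ n) (hgn : 0 < 2 * g - 2 + (n : ℤ))
    (D : Set (HV n)) (hD : IsDegSubset g D) (j : Fin n) :
    (∀ x ∈ D, Xor' (x ∈ {y ∈ D | j ∈ y.2.2}) (hvCompl g x ∈ {y ∈ D | j ∈ y.2.2})) ∧
    (∀ x1 x2 x3 : HV n, hvTriangle g x1 x2 x3 → x1 ∈ D → x2 ∈ D → x3 ∈ D →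
      hvCnt {y ∈ D | j ∈ y.2.2} x1 x2 x3 = 1) ∧
    (∀ D' : Set (HV n), IsDegSubset g D' → DegGe g ∅ D') := by
  refine ⟨hv_xor g D hD j, hv_cnt g D j, ?_⟩
  intro D' hD'
  refine ⟨Set.empty_subset _, {y ∈ D' | j ∈ y.2.2}, ?_, ?_, ?_, ?_⟩
  · intro x hx; exact ⟨hx.1, Set.notMem_empty x⟩
  · intro x hx
    have := hv_xor g D' hD' j x hx.1
    rcases this with ⟨h1, h2⟩ | ⟨h1, h2⟩
    · exact ⟨fun _ => ⟨⟨(hD'.2.1 x hx.1), Set.notMem_empty _⟩, h2⟩, fun _ => h1⟩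
    · exact ⟨fun h => absurd h h2, fun h => absurd h1 (fun h1 => h.2 h1)⟩
  · intro x1 x2 x3 _ _ _ _ hcnt
    simp [hvCnt, Set.notMem_empty] at hcnt
  · intro x1 x2 x3 ht h1 h2 h3
    exact Or.inl (hv_cnt g D' j x1 x2 x3 ht h1.1 h2.1 h3.1)
end

section
/- Let n ≥ 1 and let x = (e;h,A) ∈ D_{g,n} with ∅ ⊊ A ⊊ [n]. Then no triangle in D_{g,n} contains two elements of {x, x^c} (counted with multiplicity). Consequently {x, x^c} is a degeneracy subset of type (g,n). -/
lemma hv_tri_swap12 (g : ℤ) {n : ℕ} {x1 x2 x3 : HV n} (ht : hvTriangle g x1 x2 x3) :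
    hvTriangle g x2 x1 x3 := by
  obtain ⟨m1, m2, m3, hd, e1, e2, e3, d12, d13, d23, hu, hg⟩ := ht
  refine ⟨m2, m1, m3, by omega, by omega, by omega, by omega, d12.symm, d23, d13, ?_, by linarith⟩
  rw [show x2.2.2 ∪ x1.2.2 = x1.2.2 ∪ x2.2.2 from Finset.union_comm _ _]; exact hu

lemma hv_tri_swap23 (g : ℤ) {n : ℕ} {x1 x2 x3 : HV n} (ht : hvTriangle g x1 x2 x3) :
    hvTriangle g x1 x3 x2 := by
  obtain ⟨m1, m2, m3, hd, e1, e2, e3, d12, d13, d23, hu, hg⟩ := ht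
  refine ⟨m1, m3, m2, by omega, by omega, by omega, by omega, d13, d12, d23.symm, ?_, by linarith⟩
  rw [Finset.union_right_comm]; exact hu

/-- Core lemma: no triangle has its first two members in `{x, x^c}`. -/
lemma hv_no_pair (g : ℤ) {n : ℕ} (x : HV n)
    (hA1 : x.2.2 ≠ ∅) (hA2 : x.2.2 ≠ Finset.univ)
    {x1 x2 x3 : HV n} (ht : hvTriangle g x1 x2 x3)
    (h1 : x1 = x ∨ x1 = hvCompl g x) (h2 : x2 = x ∨ x2 = hvCompl g x) : False := by
  obtain ⟨m1, m2, m3, hd, e1, e2, e3, d12, d13, d23, hu, hg⟩ := ht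
  have hm3 := m3.2.2.2.1
  rcases h1 with rfl | rfl <;> rcases h2 with rfl | rfl
  · -- both equal x : A disjoint from itself, so A = ∅
    exact hA1 (by simpa using d12)
  · -- x and x^c : third has degree 0
    have hA3 : x3.2.2 = ∅ := by
      ext i
      simp only [Finset.notMem_empty, iff_false]
      intro hi
      have hiA := Finset.disjoint_right.mp d13 hi
      have hiAc := Finset.disjoint_right.mp d23 hi
      simp [hvCompl, Finset.mem_compl] at hiAc
      exact hiA hiAc
    rw [hA3] at hm3
    simp only [hvCompl] at hg
    simp at hm3
    linarith
  · -- x^c and x : third has degree 0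
    have hA3 : x3.2.2 = ∅ := by
      ext i
      simp only [Finset.notMem_empty, iff_false]
      intro hi
      have hiAc := Finset.disjoint_right.mp d13 hi
      have hiA := Finset.disjoint_right.mp d23 hi
      simp [hvCompl, Finset.mem_compl] at hiAc
      exact hiA hiAc
    rw [hA3] at hm3
    simp only [hvCompl] at hg
    simp at hm3
    linarith
  · -- both equal x^c : Aᶜ = ∅, so A = univ
    have : x.2.2ᶜ = ∅ := by simpa [hvCompl] using d12
    exact hA2 (by simpa using congrArg compl this)

lemma hv_mem_set {n : ℕ} {g : ℤ} {x y : HV n} (h : y ∈ ({x, hvCompl g x} : Set (HV n))) :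
    y = x ∨ y = hvCompl g x := by simpa using h

/-- Let `n ≥ 1` and `x = (e;h,A) ∈ 𝔻_{g,n}` with `∅ ⊊ A ⊊ [n]`. Then no triangle
in `𝔻_{g,n}` contains two elements of `{x, x^c}` (counted with multiplicity);
consequently `{x, x^c}` is a degeneracy subset of type `(g,n)`. -/
theorem stmt13 (g : ℤ) (n : ℕ) (hn : 1 ≤ n) (hgn : 0 < 2 * g - 2 + (n : ℤ))
    (x : HV n) (hx : hvMem g x) (hA1 : x.2.2 ≠ ∅) (hA2 : x.2.2 ≠ Finset.univ) :
    (∀ x1 x2 x3 : HV n, hvTriangle g x1 x2 x3 →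
      hvCnt ({x, hvCompl g x} : Set (HV n)) x1 x2 x3 ≤ 1) ∧
    IsDegSubset g ({x, hvCompl g x} : Set (HV n)) := by
  obtain ⟨he, hh0, hh1, hd1, hd2⟩ := hx
  have hxc : hvMem g (hvCompl g x) := by
    simp only [hvMem, hvCompl, compl_compl]
    exact ⟨he, by linarith, by linarith, by linarith, by linarith⟩
  have key : ∀ x1 x2 x3 : HV n, hvTriangle g x1 x2 x3 →
      hvCnt ({x, hvCompl g x} : Set (HV n)) x1 x2 x3 ≤ 1 := by
    intro x1 x2 x3 ht
    have p12 : ¬(x1 ∈ ({x, hvCompl g x} : Set (HV n)) ∧ x2 ∈ ({x, hvCompl g x} : Set (HV n))) :=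
      fun ⟨a, b⟩ => hv_no_pair g x hA1 hA2 ht (hv_mem_set a) (hv_mem_set b)
    have p13 : ¬(x1 ∈ ({x, hvCompl g x} : Set (HV n)) ∧ x3 ∈ ({x, hvCompl g x} : Set (HV n))) :=
      fun ⟨a, b⟩ => hv_no_pair g x hA1 hA2 (hv_tri_swap23 g ht) (hv_mem_set a) (hv_mem_set b)
    have p23 : ¬(x2 ∈ ({x, hvCompl g x} : Set (HV n)) ∧ x3 ∈ ({x, hvCompl g x} : Set (HV n))) :=
      fun ⟨a, b⟩ => hv_no_pair g x hA1 hA2 (hv_tri_swap23 g (hv_tri_swap12 g ht))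
        (hv_mem_set a) (hv_mem_set b)
    by_cases h1 : x1 ∈ ({x, hvCompl g x} : Set (HV n)) <;>
      by_cases h2 : x2 ∈ ({x, hvCompl g x} : Set (HV n)) <;>
      by_cases h3 : x3 ∈ ({x, hvCompl g x} : Set (HV n)) <;>
      simp [hvCnt, h1, h2, h3] <;> tauto
  refine ⟨key, ?_, ?_, ?_⟩
  · intro y hy
    rcases hv_mem_set hy with rfl | rfl
    · exact ⟨he, hh0, hh1, hd1, hd2⟩
    · exact hxc
  · intro y hy
    rcases hv_mem_set hy with rfl | rfl
    · exact Set.mem_insert_iff.mpr (Or.inr rfl)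
    · refine Set.mem_insert_iff.mpr (Or.inl ?_)
      obtain ⟨e, h, A⟩ := x
      simp only [hvCompl, compl_compl]
      refine Prod.ext rfl (Prod.ext ?_ rfl)
      simp; ring
  · intro x1 x2 x3 ht
    refine ⟨fun ⟨a, b⟩ => ?_, fun ⟨a, b⟩ => ?_, fun ⟨a, b⟩ => ?_⟩ <;> exfalso
    · exact hv_no_pair g x hA1 hA2 ht (hv_mem_set a) (hv_mem_set b)
    · exact hv_no_pair g x hA1 hA2 (hv_tri_swap23 g ht) (hv_mem_set a) (hv_mem_set b)
    · exact hv_no_pair g x hA1 hA2 (hv_tri_swap23 g (hv_tri_swap12 g ht))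
        (hv_mem_set a) (hv_mem_set b)
end

section
/- Let n ≥ 2, fix x = (e₀;h₀,A₀) ∈ D_{g,n} with ∅ ⊊ A₀ ⊊ [n], and fix j ∉ A₀. Define σ : D_{g,n} → ℤ by σ(x) = 1, σ(x^c) = -1, and for y = (e;h,A) ∉ {x,x^c} with j ∉ A set σ(y) = ⌈δ(y)/δ(x)⌉ and σ(y^c) = 1 - σ(y). Then σ is a V-function of type (g,n) of characteristic 0, and its degeneracy subset is exactly {x, x^c}. -/
/-- `x` is `σ`-degenerate for a V-function `σ` of characteristic `χ`. -/
def VDeg (g : ℤ) {n : ℕ} (χ : ℤ) (σ : HV n → ℤ) (x : HV n) : Prop :=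
  σ x + σ (hvCompl g x) = χ

/-- `σ` is a V-function of type `(g,n)` and characteristic `χ`. -/
def IsVFunction (g : ℤ) {n : ℕ} (χ : ℤ) (σ : HV n → ℤ) : Prop :=
  (∀ x : HV n, hvMem g x →
    (σ x + σ (hvCompl g x) - χ = 0 ∨ σ x + σ (hvCompl g x) - χ = 1)) ∧
  (∀ x1 x2 x3 : HV n, hvTriangle g x1 x2 x3 →
    ((VDeg g χ σ x1 ∧ VDeg g χ σ x2 → VDeg g χ σ x3) ∧
     (VDeg g χ σ x1 ∧ VDeg g χ σ x3 → VDeg g χ σ x2) ∧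
     (VDeg g χ σ x2 ∧ VDeg g χ σ x3 → VDeg g χ σ x1)) ∧
    ((¬VDeg g χ σ x1 ∧ ¬VDeg g χ σ x2 ∧ ¬VDeg g χ σ x3 →
        σ x1 + σ x2 + σ x3 - χ = 1 ∨ σ x1 + σ x2 + σ x3 - χ = 2) ∧
     (((VDeg g χ σ x1 ∧ ¬VDeg g χ σ x2 ∧ ¬VDeg g χ σ x3) ∨
       (¬VDeg g χ σ x1 ∧ VDeg g χ σ x2 ∧ ¬VDeg g χ σ x3) ∨
       (¬VDeg g χ σ x1 ∧ ¬VDeg g χ σ x2 ∧ VDeg g χ σ x3)) →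
        σ x1 + σ x2 + σ x3 - χ = 1) ∧
     (VDeg g χ σ x1 ∧ VDeg g χ σ x2 ∧ VDeg g χ σ x3 →
        σ x1 + σ x2 + σ x3 - χ = 0)))

/-- The log-canonical degree `δ(e;h,A) = 2h - 2 + e + |A|`. -/
def hvDelta {n : ℕ} (x : HV n) : ℤ := 2 * x.2.1 - 2 + x.1 + (x.2.2.card : ℤ)


lemma aux_ceil_le (a b : ℚ) : ⌈a + b⌉ ≤ ⌈a⌉ + ⌈b⌉ := by
  apply Int.ceil_le.mpr
  push_cast
  exact add_le_add (Int.le_ceil a) (Int.le_ceil b)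

lemma aux_le_ceil (a b : ℚ) : ⌈a⌉ + ⌈b⌉ ≤ ⌈a + b⌉ + 1 := by
  have h1 : ⌈a⌉ + ⌈b⌉ - 1 = ⌈b + ((⌈a⌉ - 1 : ℤ) : ℚ)⌉ := by
    rw [Int.ceil_add_intCast]; ring
  have h2 : ⌈b + ((⌈a⌉ - 1 : ℤ) : ℚ)⌉ ≤ ⌈a + b⌉ := by
    apply Int.ceil_le_ceil
    have := Int.ceil_lt_add_one a
    push_cast
    linarith
  omega

lemma aux_ceil_one (q : ℚ) (h1 : 0 < q) (h2 : q ≤ 1) : ⌈q⌉ = 1 := by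
  rw [Int.ceil_eq_iff]
  push_cast
  constructor <;> linarith

lemma aux_compl_compl (g : ℤ) {n : ℕ} (y : HV n) : hvCompl g (hvCompl g y) = y := by
  obtain ⟨e, h, A⟩ := y
  simp only [hvCompl, compl_compl]
  refine Prod.ext rfl (Prod.ext ?_ rfl)
  simp; ring

lemma aux_card_compl {n : ℕ} (A : Finset (Fin n)) : ((Aᶜ).card : ℤ) = n - A.card := by
  have h := Finset.card_add_card_compl A
  rw [Fintype.card_fin] at h
  omega

lemma aux_mem_compl (g : ℤ) {n : ℕ} (y : HV n) (hy : hvMem g y) : hvMem g (hvCompl g y) := by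
  obtain ⟨e, h, A⟩ := y
  obtain ⟨h1, h2, h3, h4, h5⟩ := hy
  refine ⟨h1, ?_, ?_, ?_, ?_⟩ <;>
    simp only [hvCompl, compl_compl, aux_card_compl] at * <;> omega

lemma aux_delta_compl (g : ℤ) {n : ℕ} (y : HV n) :
    hvDelta (hvCompl g y) = 2 * g - 2 + n - hvDelta y := by
  obtain ⟨e, h, A⟩ := y
  simp only [hvCompl, hvDelta, aux_card_compl]
  have := Finset.card_le_univ A
  ring

lemma aux_tri_rot (g : ℤ) {n : ℕ} (x1 x2 x3 : HV n) (h : hvTriangle g x1 x2 x3) :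
    hvTriangle g x2 x3 x1 := by
  obtain ⟨m1, m2, m3, hd, e1, e2, e3, d12, d13, d23, hu, hg⟩ := h
  refine ⟨m2, m3, m1, by omega, by omega, by omega, by omega, d23, d12.symm, d13.symm, ?_, by omega⟩
  rw [← hu]
  ext a; simp [Finset.mem_union]; tauto

lemma aux_tri_swap (g : ℤ) {n : ℕ} (x1 x2 x3 : HV n) (h : hvTriangle g x1 x2 x3) :
    hvTriangle g x2 x1 x3 := by
  obtain ⟨m1, m2, m3, hd, e1, e2, e3, d12, d13, d23, hu, hg⟩ := h
  refine ⟨m2, m1, m3, by omega, by omega, by omega, by omega, d12.symm, d23, d13, ?_, by omega⟩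
  rw [← hu]
  ext a; simp [Finset.mem_union]; tauto

lemma aux_tri_delta (g : ℤ) {n : ℕ} (x1 x2 x3 : HV n) (h : hvTriangle g x1 x2 x3) :
    hvDelta x1 + hvDelta x2 + hvDelta x3 = 2 * g - 2 + n := by
  obtain ⟨m1, m2, m3, hd, e1, e2, e3, d12, d13, d23, hu, hg⟩ := h
  have hcard : x1.2.2.card + x2.2.2.card + x3.2.2.card = n := by
    have h1 : Disjoint (x1.2.2 ∪ x2.2.2) x3.2.2 := Finset.disjoint_union_left.mpr ⟨d13, d23⟩
    have := Finset.card_union_of_disjoint d12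
    have := Finset.card_union_of_disjoint h1
    have hc : (x1.2.2 ∪ x2.2.2 ∪ x3.2.2).card = n := by rw [hu]; simp
    omega
  simp only [hvDelta]
  omega

set_option maxHeartbeats 1000000 in
/-- Realizability of mixed submaximal degeneracy subsets: fix
`x = (e₀;h₀,A₀) ∈ 𝔻_{g,n}` with `∅ ⊊ A₀ ⊊ [n]` and `j ∉ A₀`, and let
`σ : 𝔻_{g,n} → ℤ` satisfy `σ(x) = 1`, `σ(x^c) = -1`, and for every
`y = (e;h,A) ∉ {x, x^c}` with `j ∉ A`, `σ(y) = ⌈δ(y)/δ(x)⌉` and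
`σ(y^c) = 1 - σ(y)`. Then `σ` is a V-function of type `(g,n)` of
characteristic `0` whose degeneracy subset is exactly `{x, x^c}`. -/
theorem stmt15 (g : ℤ) (n : ℕ) (hn : 2 ≤ n) (hgn : 0 < 2 * g - 2 + (n : ℤ))
    (x : HV n) (hx : hvMem g x) (hA1 : x.2.2 ≠ ∅) (hA2 : x.2.2 ≠ Finset.univ)
    (j : Fin n) (hj : j ∉ x.2.2)
    (σ : HV n → ℤ)
    (hσx : σ x = 1) (hσxc : σ (hvCompl g x) = -1)
    (hσy : ∀ y : HV n, hvMem g y → y ≠ x → y ≠ hvCompl g x → j ∉ y.2.2 →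
      σ y = ⌈(hvDelta y : ℚ) / (hvDelta x : ℚ)⌉ ∧ σ (hvCompl g y) = 1 - σ y) :
    IsVFunction g 0 σ ∧
    (∀ y : HV n, hvMem g y → (VDeg g 0 σ y ↔ y = x ∨ y = hvCompl g x)) := by
  have hd : 0 < hvDelta x := hx.2.2.2.1
  have hdQ : (0 : ℚ) < (hvDelta x : ℚ) := by exact_mod_cast hd
  have hjc : j ∈ (hvCompl g x).2.2 := by
    simp only [hvCompl, Finset.mem_compl]; exact hj
  -- sum of σ over complementary nondegenerate pairs
  have hsum : ∀ y : HV n, hvMem g y → y ≠ x → y ≠ hvCompl g x →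
      σ y + σ (hvCompl g y) = 1 := by
    intro y hy h1 h2
    by_cases hjy : j ∈ y.2.2
    · have hyc := aux_mem_compl g y hy
      have hne1 : hvCompl g y ≠ x := by
        intro h; apply h2; rw [← aux_compl_compl g y, h]
      have hne2 : hvCompl g y ≠ hvCompl g x := by
        intro h; apply h1
        have := congrArg (hvCompl g) h
        rwa [aux_compl_compl, aux_compl_compl] at this
      have hnj : j ∉ (hvCompl g y).2.2 := by
        simp only [hvCompl, Finset.mem_compl, not_not]; exact hjy
      obtain ⟨_, hc⟩ := hσy _ hyc hne1 hne2 hnj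
      rw [aux_compl_compl] at hc; omega
    · obtain ⟨_, hc⟩ := hσy y hy h1 h2 hjy; omega
  -- degeneracy characterization
  have hdeg : ∀ y : HV n, hvMem g y → (VDeg g 0 σ y ↔ y = x ∨ y = hvCompl g x) := by
    intro y hy
    constructor
    · intro hv
      by_contra hne
      push_neg at hne
      have := hsum y hy hne.1 hne.2
      have : σ y + σ (hvCompl g y) = 1 := this
      unfold VDeg at hv; omega
    · rintro (rfl | rfl)
      · show σ y + σ (hvCompl g y) = 0
        rw [hσx, hσxc]; ring
      · show σ (hvCompl g x) + σ (hvCompl g (hvCompl g x)) = 0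
        rw [aux_compl_compl, hσx, hσxc]; ring
  -- no triangle contains two degenerate elements
  have htwo : ∀ x1 x2 x3 : HV n, hvTriangle g x1 x2 x3 →
      (x1 = x ∨ x1 = hvCompl g x) → (x2 = x ∨ x2 = hvCompl g x) → False := by
    intro x1 x2 x3 ht h1 h2
    have hds := aux_tri_delta g x1 x2 x3 ht
    have hd3 : 0 < hvDelta x3 := ht.2.2.1.2.2.2.1
    have hdc : hvDelta (hvCompl g x) = 2 * g - 2 + n - hvDelta x := aux_delta_compl g x
    have hdis : Disjoint x1.2.2 x2.2.2 := ht.2.2.2.2.2.2.2.1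
    rcases h1 with h1 | h1 <;> rcases h2 with h2 | h2
    · rw [h1, h2, Finset.disjoint_self_iff_empty] at hdis
      exact hA1 hdis
    · rw [h1, h2] at hds; omega
    · rw [h1, h2] at hds; omega
    · rw [h1, h2] at hdis
      simp only [hvCompl] at hdis
      rw [Finset.disjoint_self_iff_empty] at hdis
      apply hA2
      have := congrArg (·ᶜ) hdis
      simpa using this
  -- main triangle computation, with j in the third marked set
  have main : ∀ u v w : HV n, hvTriangle g u v w → j ∈ w.2.2 →
      (σ u + σ v + σ w = 1 ∨ σ u + σ v + σ w = 2) ∧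
      ((u = x ∨ u = hvCompl g x ∨ v = x ∨ v = hvCompl g x ∨ w = x ∨ w = hvCompl g x) →
        σ u + σ v + σ w = 1) := by
    intro u v w ht hjw
    have mu := ht.1
    have mv := ht.2.1
    have mw := ht.2.2.1
    have hju : j ∉ u.2.2 := Finset.disjoint_right.mp ht.2.2.2.2.2.2.2.2.1 hjw
    have hjv : j ∉ v.2.2 := Finset.disjoint_right.mp ht.2.2.2.2.2.2.2.2.2.1 hjw
    have hune : u ≠ hvCompl g x := fun h => hju (h ▸ hjc)
    have hvne : v ≠ hvCompl g x := fun h => hjv (h ▸ hjc)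
    have hwne : w ≠ x := fun h => hj (h ▸ hjw)
    have hdsum := aux_tri_delta g u v w ht
    have hdu : 0 < hvDelta u := mu.2.2.2.1
    have hdv : 0 < hvDelta v := mv.2.2.2.1
    by_cases hwc : w = hvCompl g x
    · -- w = x^c : both u, v distinct from x, and δ(u) + δ(v) = δ(x)
      have hu : u ≠ x := fun h =>
        htwo w u v (aux_tri_rot g v w u (aux_tri_rot g u v w ht)) (Or.inr hwc) (Or.inl h)
      have hv : v ≠ x := fun h =>
        htwo w v u (aux_tri_rot g u w v (aux_tri_rot g v u w (aux_tri_swap g u v w ht)))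
          (Or.inr hwc) (Or.inl h)
      have hδw : hvDelta w = 2 * g - 2 + n - hvDelta x := by rw [hwc, aux_delta_compl]
      have hδuv : hvDelta u + hvDelta v = hvDelta x := by omega
      have c1 : ⌈(hvDelta u : ℚ) / (hvDelta x : ℚ)⌉ = 1 := by
        apply aux_ceil_one
        · exact div_pos (by exact_mod_cast hdu) hdQ
        · rw [div_le_one hdQ]; exact_mod_cast (by omega : hvDelta u ≤ hvDelta x)
      have c2 : ⌈(hvDelta v : ℚ) / (hvDelta x : ℚ)⌉ = 1 := by
        apply aux_ceil_one
        · exact div_pos (by exact_mod_cast hdv) hdQ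
        · rw [div_le_one hdQ]; exact_mod_cast (by omega : hvDelta v ≤ hvDelta x)
      have s1 := (hσy u mu hu hune hju).1
      have s2 := (hσy v mv hv hvne hjv).1
      have hres : σ u + σ v + σ w = 1 := by
        rw [s1, s2, hwc, hσxc, c1, c2]; norm_num
      exact ⟨Or.inl hres, fun _ => hres⟩
    · -- w ≠ x^c
      have hwcm := aux_mem_compl g w mw
      have hwcne1 : hvCompl g w ≠ x := by
        intro h; apply hwc; rw [← aux_compl_compl g w, h]
      have hwcne2 : hvCompl g w ≠ hvCompl g x := by
        intro h; apply hwne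
        have := congrArg (hvCompl g) h
        rwa [aux_compl_compl, aux_compl_compl] at this
      have hjwc : j ∉ (hvCompl g w).2.2 := by
        simp only [hvCompl, Finset.mem_compl, not_not]; exact hjw
      obtain ⟨hwcv, hwv⟩ := hσy _ hwcm hwcne1 hwcne2 hjwc
      rw [aux_compl_compl] at hwv
      have hδwc : hvDelta (hvCompl g w) = hvDelta u + hvDelta v := by
        rw [aux_delta_compl]; omega
      by_cases hu : u = x
      · have hv : v ≠ x := fun h => htwo u v w ht (Or.inl hu) (Or.inl h)
        have s2 := (hσy v mv hv hvne hjv).1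
        have cc : ⌈(hvDelta (hvCompl g w) : ℚ) / (hvDelta x : ℚ)⌉ =
            ⌈(hvDelta v : ℚ) / (hvDelta x : ℚ)⌉ + 1 := by
          rw [hδwc, hu]
          have heq : ((hvDelta x + hvDelta v : ℤ) : ℚ) / (hvDelta x : ℚ) =
              (hvDelta v : ℚ) / (hvDelta x : ℚ) + 1 := by
            field_simp; push_cast; try ring
          rw [heq, Int.ceil_add_one]
        have hres : σ u + σ v + σ w = 1 := by
          rw [hu, hσx, s2, hwv, hwcv, cc]; ring
        exact ⟨Or.inl hres, fun _ => hres⟩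
      · by_cases hv : v = x
        · have s1 := (hσy u mu hu hune hju).1
          have cc : ⌈(hvDelta (hvCompl g w) : ℚ) / (hvDelta x : ℚ)⌉ =
              ⌈(hvDelta u : ℚ) / (hvDelta x : ℚ)⌉ + 1 := by
            rw [hδwc, hv]
            have heq : ((hvDelta u + hvDelta x : ℤ) : ℚ) / (hvDelta x : ℚ) =
                (hvDelta u : ℚ) / (hvDelta x : ℚ) + 1 := by
              field_simp; push_cast; try ring
            rw [heq, Int.ceil_add_one]
          have hres : σ u + σ v + σ w = 1 := by
            rw [hv, hσx, s1, hwv, hwcv, cc]; ring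
          exact ⟨Or.inl hres, fun _ => hres⟩
        · -- generic case
          have s1 := (hσy u mu hu hune hju).1
          have s2 := (hσy v mv hv hvne hjv).1
          have hsplit : ((hvDelta (hvCompl g w) : ℤ) : ℚ) / (hvDelta x : ℚ) =
              (hvDelta u : ℚ) / (hvDelta x : ℚ) + (hvDelta v : ℚ) / (hvDelta x : ℚ) := by
            rw [hδwc]; push_cast; ring
          rw [hsplit] at hwcv
          have hA := aux_ceil_le ((hvDelta u : ℚ) / (hvDelta x : ℚ))
            ((hvDelta v : ℚ) / (hvDelta x : ℚ))
          have hB := aux_le_ceil ((hvDelta u : ℚ) / (hvDelta x : ℚ))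
            ((hvDelta v : ℚ) / (hvDelta x : ℚ))
          constructor
          · omega
          · rintro (h | h | h | h | h | h) <;> first
              | exact absurd h hu | exact absurd h hune | exact absurd h hv
              | exact absurd h hvne | exact absurd h hwne | exact absurd h hwc
  -- symmetrized triangle computation
  have tri_main : ∀ x1 x2 x3 : HV n, hvTriangle g x1 x2 x3 →
      (σ x1 + σ x2 + σ x3 = 1 ∨ σ x1 + σ x2 + σ x3 = 2) ∧
      ((x1 = x ∨ x1 = hvCompl g x ∨ x2 = x ∨ x2 = hvCompl g x ∨
        x3 = x ∨ x3 = hvCompl g x) → σ x1 + σ x2 + σ x3 = 1) := by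
    intro x1 x2 x3 ht
    have hju : j ∈ x1.2.2 ∪ x2.2.2 ∪ x3.2.2 := by
      rw [ht.2.2.2.2.2.2.2.2.2.2.1]; exact Finset.mem_univ j
    simp only [Finset.mem_union] at hju
    rcases hju with (hj1 | hj2) | hj3
    · have h := main x2 x3 x1 (aux_tri_rot g x1 x2 x3 ht) hj1
      exact ⟨by omega, fun hc => by have := h.2 (by tauto); omega⟩
    · have h := main x3 x1 x2 (aux_tri_rot g x2 x3 x1 (aux_tri_rot g x1 x2 x3 ht)) hj2
      exact ⟨by omega, fun hc => by have := h.2 (by tauto); omega⟩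
    · have h := main x1 x2 x3 ht hj3
      exact ⟨by omega, fun hc => by have := h.2 (by tauto); omega⟩
  refine ⟨⟨?_, ?_⟩, hdeg⟩
  · -- part (1)
    intro y hy
    by_cases h1 : y = x
    · subst h1; rw [hσx, hσxc]; left; ring
    · by_cases h2 : y = hvCompl g x
      · subst h2; rw [aux_compl_compl, hσx, hσxc]; left; ring
      · have := hsum y hy h1 h2; right; omega
  · -- triangle condition
    intro x1 x2 x3 ht
    have m1 := ht.1
    have m2 := ht.2.1
    have m3 := ht.2.2.1
    have hD1 := hdeg x1 m1
    have hD2 := hdeg x2 m2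
    have hD3 := hdeg x3 m3
    have tm := tri_main x1 x2 x3 ht
    have ht12 : hvTriangle g x1 x2 x3 := ht
    have ht13 : hvTriangle g x1 x3 x2 :=
      aux_tri_swap g x3 x1 x2 (aux_tri_rot g x2 x3 x1 (aux_tri_rot g x1 x2 x3 ht))
    have ht23 : hvTriangle g x2 x3 x1 := aux_tri_rot g x1 x2 x3 ht
    refine ⟨⟨?_, ?_, ?_⟩, ?_, ?_, ?_⟩
    · rintro ⟨d1, d2⟩
      exact (htwo x1 x2 x3 ht12 (hD1.mp d1) (hD2.mp d2)).elim
    · rintro ⟨d1, d3⟩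
      exact (htwo x1 x3 x2 ht13 (hD1.mp d1) (hD3.mp d3)).elim
    · rintro ⟨d2, d3⟩
      exact (htwo x2 x3 x1 ht23 (hD2.mp d2) (hD3.mp d3)).elim
    · intro _
      have := tm.1; omega
    · rintro (⟨d1, _, _⟩ | ⟨_, d2, _⟩ | ⟨_, _, d3⟩)
      · have := tm.2 (by rcases hD1.mp d1 with h | h <;> tauto); omega
      · have := tm.2 (by rcases hD2.mp d2 with h | h <;> tauto); omega
      · have := tm.2 (by rcases hD3.mp d3 with h | h <;> tauto); omega
    · rintro ⟨d1, d2, _⟩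
      exact (htwo x1 x2 x3 ht12 (hD1.mp d1) (hD2.mp d2)).elim
end

section
/- Let σ be a V-function of type (g,n) and characteristic χ, and define ι·σ : D_{g,n} → ℤ by (ι·σ)(x) = -σ(x) if x is σ-degenerate and (ι·σ)(x) = -σ(x)+1 otherwise. Then ι·σ is a V-function of characteristic -χ, its degeneracy subset equals that of σ, and ι·(ι·σ) = σ. -/
/-- The involution `ι` on V-functions: `(ι·σ)(x) = -σ(x)` if `x` is `σ`-degenerate
and `(ι·σ)(x) = -σ(x) + 1` otherwise. -/
def vIota (g : ℤ) {n : ℕ} (χ : ℤ) (σ : HV n → ℤ) : HV n → ℤ :=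
  fun x => if σ x + σ (hvCompl g x) = χ then -σ x else -σ x + 1

lemma hvCompl_compl (g : ℤ) {n : ℕ} (x : HV n) : hvCompl g (hvCompl g x) = x := by
  simp only [hvCompl, compl_compl]
  refine Prod.ext rfl (Prod.ext ?_ rfl)
  simp; ring

set_option maxHeartbeats 4000000 in
/-- If `σ` is a V-function of type `(g,n)` and characteristic `χ`, then `ι·σ` is a
V-function of characteristic `-χ`, its degeneracy subset equals that of `σ`, and
`ι·(ι·σ) = σ`. -/
theorem stmt17 (g : ℤ) (n : ℕ) (hgn : 0 < 2 * g - 2 + (n : ℤ)) (χ : ℤ)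
    (σ : HV n → ℤ) (hσ : IsVFunction g χ σ) :
    IsVFunction g (-χ) (vIota g χ σ) ∧
    (∀ x : HV n, hvMem g x → (VDeg g (-χ) (vIota g χ σ) x ↔ VDeg g χ σ x)) ∧
    (∀ x : HV n, hvMem g x → vIota g (-χ) (vIota g χ σ) x = σ x) := by
  obtain ⟨h1, h2⟩ := hσ
  refine ⟨⟨?_, ?_⟩, ?_, ?_⟩
  · intro x hx
    have := h1 x hx
    simp only [vIota, hvCompl_compl]
    split_ifs <;> omega
  · intro x1 x2 x3 ht
    have H := h2 x1 x2 x3 ht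
    have e1 := h1 x1 ht.1
    have e2 := h1 x2 ht.2.1
    have e3 := h1 x3 ht.2.2.1
    clear h1 h2 ht hgn
    simp only [VDeg, vIota, hvCompl_compl] at H ⊢
    split_ifs <;> omega
  · intro x hx
    have := h1 x hx
    simp only [VDeg, vIota, hvCompl_compl]
    split_ifs <;> omega
  · intro x hx
    have := h1 x hx
    simp only [vIota, hvCompl_compl]
    split_ifs <;> omega
end
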